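/- arXiv:2001.02405 — 2 statements merged into one kernel-verified Lean document; each statement's English description precedes it below -/
import Mathlib

section
/- Let F ≥ 2 be a real number. Let s = σ + it ∈ ℂ satisfy 1/F ≤ σ ≤ 1 − 1/F and |t| < 1, and let ε > 0 be real. Then Π_ε(s) / ( (1+2ε)·(1 + 2ε(1+ε)·F) ) < Π_0(s) ≤ (1 + ε·F)·Π_ε(s). -/
/-- The pairing function `Π_ε(s) = 1/(s+ε) + 1/(s̄+ε) + 1/(1−s+ε) + 1/(1−s̄+ε)`;
for real `ε` it is real, so we record its real part. -/
noncomputable def pairingFn (ε : ℝ) (s : ℂ) : ℝ :=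
  ((s + ε)⁻¹ + ((starRingEnd ℂ) s + ε)⁻¹ + (1 - s + ε)⁻¹ +
    (1 - (starRingEnd ℂ) s + ε)⁻¹).re

lemma pairing_eq (ε : ℝ) (s : ℂ) :
    pairingFn ε s = 2 * (s.re + ε) / ((s.re + ε) ^ 2 + s.im ^ 2)
      + 2 * (1 - s.re + ε) / ((1 - s.re + ε) ^ 2 + s.im ^ 2) := by
  simp only [pairingFn, Complex.add_re, Complex.add_im, Complex.sub_re, Complex.sub_im,
    Complex.one_re, Complex.one_im, Complex.inv_re, Complex.normSq_apply,
    Complex.conj_re, Complex.conj_im, Complex.ofReal_re, Complex.ofReal_im]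
  ring

lemma g_upper {F x t ε : ℝ} (hF : 2 ≤ F) (hx : 1 / F ≤ x) (hε : 0 < ε) :
    x / (x ^ 2 + t ^ 2) ≤ (1 + ε * F) * ((x + ε) / ((x + ε) ^ 2 + t ^ 2)) := by
  have hF0 : (0:ℝ) < F := by linarith
  have hx0 : 0 < x := lt_of_lt_of_le (by positivity) hx
  have h1 : 1 ≤ F * x := by rw [div_le_iff₀ hF0] at hx; linarith
  rw [← mul_div_assoc, div_le_div_iff₀ (by positivity) (by positivity)]
  nlinarith [mul_nonneg (mul_nonneg hε.le (mul_nonneg hx0.le hx0.le)) (sub_nonneg.2 h1),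
    mul_nonneg (mul_nonneg (mul_nonneg hε.le hε.le) hx0.le) (sub_nonneg.2 h1),
    mul_nonneg hε.le (sq_nonneg t),
    mul_nonneg (mul_nonneg hε.le hF0.le) (mul_nonneg hx0.le (sq_nonneg t)),
    mul_nonneg (mul_nonneg (mul_nonneg hε.le hε.le) hF0.le) (sq_nonneg t)]

lemma g_lower {F x t ε : ℝ} (hF : 2 ≤ F) (hx : 1 / F ≤ x) (hε : 0 < ε) :
    (x + ε) / ((x + ε) ^ 2 + t ^ 2) ≤ (1 + ε * F) * (x / (x ^ 2 + t ^ 2)) := by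
  have hF0 : (0:ℝ) < F := by linarith
  have hx0 : 0 < x := lt_of_lt_of_le (by positivity) hx
  have h1 : 1 ≤ F * x := by rw [div_le_iff₀ hF0] at hx; linarith
  rw [← mul_div_assoc, div_le_div_iff₀ (by positivity) (by positivity)]
  nlinarith [mul_nonneg (mul_nonneg hε.le (sq_nonneg t)) (sub_nonneg.2 h1),
    mul_nonneg (mul_nonneg hε.le hε.le) hx0.le,
    mul_nonneg (mul_nonneg (mul_nonneg hε.le hF0.le) hx0.le) (mul_nonneg hx0.le hx0.le),
    mul_nonneg (mul_nonneg (mul_nonneg (mul_nonneg hε.le hε.le) hF0.le) hx0.le) hx0.le,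
    mul_nonneg (mul_nonneg (mul_nonneg (mul_nonneg hε.le hε.le) hε.le) hF0.le) hx0.le]

/-- for a real `F ≥ 2`, `s = σ + it` with `1/F ≤ σ ≤ 1 − 1/F` and
`|t| < 1`, and a real `ε > 0`, one has
`Π_ε(s)/((1+2ε)(1 + 2ε(1+ε)F)) < Π_0(s) ≤ (1 + εF)·Π_ε(s)`. -/
theorem pairing_ineq_R3 (F : ℝ) (hF : 2 ≤ F) (s : ℂ)
    (hσ0 : 1 / F ≤ s.re) (hσ1 : s.re ≤ 1 - 1 / F) (ht : |s.im| < 1)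
    (ε : ℝ) (hε : 0 < ε) :
    pairingFn ε s / ((1 + 2 * ε) * (1 + 2 * ε * (1 + ε) * F)) < pairingFn 0 s ∧
      pairingFn 0 s ≤ (1 + ε * F) * pairingFn ε s := by
  have hF0 : (0:ℝ) < F := by linarith
  set σ := s.re with hσ
  set t := s.im with ht'
  have hy : 1 / F ≤ 1 - σ := by linarith
  have hx0 : 0 < σ := lt_of_lt_of_le (by positivity) hσ0
  have hy0 : 0 < 1 - σ := lt_of_lt_of_le (by positivity) hy
  have e0 : pairingFn 0 s = 2 * (σ / (σ ^ 2 + t ^ 2)) + 2 * ((1 - σ) / ((1 - σ) ^ 2 + t ^ 2)) := by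
    rw [pairing_eq]; ring
  have eε : pairingFn ε s = 2 * ((σ + ε) / ((σ + ε) ^ 2 + t ^ 2))
      + 2 * ((1 - σ + ε) / ((1 - σ + ε) ^ 2 + t ^ 2)) := by
    rw [pairing_eq]; ring
  have L1 := g_upper (x := σ) (t := t) hF hσ0 hε
  have L2 := g_upper (x := 1 - σ) (t := t) hF hy hε
  have L3 := g_lower (x := σ) (t := t) hF hσ0 hε
  have L4 := g_lower (x := 1 - σ) (t := t) hF hy hε
  have hgx : 0 < σ / (σ ^ 2 + t ^ 2) := by positivity
  have hgy : 0 < (1 - σ) / ((1 - σ) ^ 2 + t ^ 2) := by positivity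
  set gx := σ / (σ ^ 2 + t ^ 2)
  set gy := (1 - σ) / ((1 - σ) ^ 2 + t ^ 2)
  set gxe := (σ + ε) / ((σ + ε) ^ 2 + t ^ 2)
  set gye := (1 - σ + ε) / ((1 - σ + ε) ^ 2 + t ^ 2)
  have hP0 : 0 < pairingFn 0 s := by rw [e0]; nlinarith
  have h5 : pairingFn ε s ≤ (1 + ε * F) * pairingFn 0 s := by
    rw [e0, eε]; nlinarith [L3, L4]
  have h6 : pairingFn 0 s ≤ (1 + ε * F) * pairingFn ε s := by
    rw [e0, eε]; nlinarith [L1, L2]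
  have hC : (0:ℝ) < (1 + 2 * ε) * (1 + 2 * ε * (1 + ε) * F) := by
    have h1 : (0:ℝ) < 1 + 2 * ε * (1 + ε) * F := by
      nlinarith [mul_pos hε hF0, mul_pos (mul_pos hε hε) hF0]
    nlinarith
  refine ⟨?_, h6⟩
  rw [div_lt_iff₀ hC]
  have hlt : (1 + ε * F) < (1 + 2 * ε) * (1 + 2 * ε * (1 + ε) * F) := by
    nlinarith [mul_pos hε hF0, mul_pos (mul_pos hε hε) hF0,
      mul_pos (mul_pos (mul_pos hε hε) hε) hF0]
  calc pairingFn ε s ≤ (1 + ε * F) * pairingFn 0 s := h5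
    _ < (1 + 2 * ε) * (1 + 2 * ε * (1 + ε) * F) * pairingFn 0 s :=
        mul_lt_mul_of_pos_right hlt hP0
    _ = pairingFn 0 s * ((1 + 2 * ε) * (1 + 2 * ε * (1 + ε) * F)) := by ring
end

section
/- Let φ := (√5 − 1)/2. Then for every s ∈ ℂ with 0 < Re(s) < 1, one has Π_0(s) > Π_φ(s)/(1 + 2φ). -/
lemma pairingFn_eq (ε : ℝ) (s : ℂ) :
    pairingFn ε s = 2 * ((s.re + ε) / ((s.re + ε) ^ 2 + s.im ^ 2)) +
      2 * ((1 - s.re + ε) / ((1 - s.re + ε) ^ 2 + s.im ^ 2)) := by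
  simp only [pairingFn, Complex.add_re, Complex.inv_re, Complex.normSq_apply,
    Complex.add_im, Complex.sub_re, Complex.sub_im, Complex.one_re, Complex.one_im,
    Complex.conj_re, Complex.conj_im, Complex.ofReal_re, Complex.ofReal_im]
  ring

lemma key_ineq (a u φ : ℝ) (ha : 0 < a) (ha1 : a < 1) (hu : 0 ≤ u)
    (hφ : φ ^ 2 = 1 - φ) (hφ0 : 0 < φ) :
    ((a + φ) / ((a + φ) ^ 2 + u) + (1 - a + φ) / ((1 - a + φ) ^ 2 + u)) / (1 + 2 * φ) <
      a / (a ^ 2 + u) + (1 - a) / ((1 - a) ^ 2 + u) := by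
  have hb : 0 < 1 - a := by linarith
  have hD1 : 0 < a ^ 2 + u := by nlinarith
  have hD2 : 0 < (1 - a) ^ 2 + u := by nlinarith
  have hD3 : 0 < (a + φ) ^ 2 + u := by nlinarith
  have hD4 : 0 < (1 - a + φ) ^ 2 + u := by nlinarith
  have h12 : 0 < 1 + 2 * φ := by linarith
  rw [div_add_div _ _ (ne_of_gt hD3) (ne_of_gt hD4),
    div_add_div _ _ (ne_of_gt hD1) (ne_of_gt hD2), div_div,
    div_lt_div_iff₀ (by positivity) (by positivity)]
  have key2 : (a * ((1 - a) ^ 2 + u) + (a ^ 2 + u) * (1 - a)) *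
        ((((a + φ) ^ 2 + u) * ((1 - a + φ) ^ 2 + u)) * (1 + 2 * φ)) -
      ((a + φ) * ((1 - a + φ) ^ 2 + u) + ((a + φ) ^ 2 + u) * (1 - a + φ)) *
        ((a ^ 2 + u) * ((1 - a) ^ 2 + u)) =
      φ * (3 + φ) * (a * (1 - a) * (1 + a * (1 - a)) + 6 * (a * (1 - a)) * u + u ^ 2) := by
    linear_combination (-4 * a ^ 3 * φ + 3 * a * φ + 12 * a * u * φ + 2 * a ^ 4 * φ
      - 12 * a ^ 2 * u * φ + u * φ + 2 * u ^ 2 * φ - a ^ 2 * φ + 3 * a * φ ^ 2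
      - 3 * a ^ 2 * φ ^ 2 + 3 * u * φ ^ 2 + 2 * a * φ ^ 3 - 2 * a ^ 2 * φ ^ 3
      + 2 * u * φ ^ 3) * hφ
  have hpos : 0 < φ * (3 + φ) *
      (a * (1 - a) * (1 + a * (1 - a)) + 6 * (a * (1 - a)) * u + u ^ 2) := by
    have hab : 0 < a * (1 - a) := mul_pos ha hb
    have : 0 < a * (1 - a) * (1 + a * (1 - a)) + 6 * (a * (1 - a)) * u + u ^ 2 := by
      nlinarith [sq_nonneg u]
    positivity
  linarith [key2, hpos]

/-- with `φ = (√5 − 1)/2`, for every `s` in the critical strip one has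
`Π_0(s) > Π_φ(s)/(1 + 2φ)`. -/
theorem pairing_golden_ratio_ineq (s : ℂ) (hσ0 : 0 < s.re) (hσ1 : s.re < 1) :
    pairingFn 0 s > pairingFn ((Real.sqrt 5 - 1) / 2) s /
      (1 + 2 * ((Real.sqrt 5 - 1) / 2)) := by
  set φ : ℝ := (Real.sqrt 5 - 1) / 2 with hφdef
  have h5 : Real.sqrt 5 ^ 2 = 5 := Real.sq_sqrt (by norm_num)
  have hs1 : (1 : ℝ) < Real.sqrt 5 := by
    nlinarith [Real.sqrt_nonneg 5]
  have hφ0 : 0 < φ := by rw [hφdef]; linarith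
  have hφ : φ ^ 2 = 1 - φ := by rw [hφdef]; linear_combination (1 / 4 : ℝ) * h5
  have h12 : 0 < 1 + 2 * φ := by linarith
  have hk := key_ineq s.re (s.im ^ 2) φ hσ0 hσ1 (sq_nonneg _) hφ hφ0
  rw [div_lt_iff₀ h12] at hk
  rw [pairingFn_eq, pairingFn_eq, gt_iff_lt, div_lt_iff₀ h12]
  simp only [add_zero]
  nlinarith [hk]
end
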